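/- arXiv:2603.01049 — 8 statements merged into one kernel-verified Lean document; each statement's English description precedes it below -/
import Mathlib

section
/- Let F be a finite field with q ≥ 2 elements, let E : F^k → F^n be an injective encoding whose image C has minimum Hamming distance d, and let α ≥ d. If the α-distance graph G_α(C) has exactly Q connected components, then there is no function f : F^k → S with |Im(f)| ≥ Q + 1 and no integer d_f > α such that d(E(u₁), E(u₂)) ≥ d_f for all u₁, u₂ with f(u₁) ≠ f(u₂). Equivalently: if d_f > α and f satisfies d(E(u₁),E(u₂)) ≥ d_f whenever f(u₁) ≠ f(u₂), then the image of f has at most Q elements. -/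
/-- The α-distance graph of a code `C ⊆ F^n`: vertices are codewords, and two
distinct codewords are adjacent iff their Hamming distance is at most `α`. -/
def distGraph {F : Type*} [DecidableEq F] {n : ℕ} (C : Set (Fin n → F)) (α : ℕ) :
    SimpleGraph C where
  Adj c₁ c₂ := c₁ ≠ c₂ ∧ hammingDist (c₁ : Fin n → F) (c₂ : Fin n → F) ≤ α
  symm := ⟨fun _ _ ⟨h, hd⟩ => ⟨h.symm, by rwa [hammingDist_comm]⟩⟩
  loopless := ⟨fun _ ⟨h, _⟩ => h rfl⟩

/-- `d` is the minimum Hamming distance of the code `C`. -/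
def IsMinDist {F : Type*} [DecidableEq F] {n : ℕ} (C : Set (Fin n → F)) (d : ℕ) : Prop :=
  (∀ c₁ ∈ C, ∀ c₂ ∈ C, c₁ ≠ c₂ → d ≤ hammingDist c₁ c₂) ∧
  (∃ c₁ ∈ C, ∃ c₂ ∈ C, c₁ ≠ c₂ ∧ hammingDist c₁ c₂ = d)

/-- If the α-distance graph of the code `C = E(F^k)` has exactly `Q` connected
components, then any function `f` such that codewords corresponding to different
function values are at distance `≥ d_f > α` has at most `Q` distinct values. -/
theorem distGraph_components_image_bound
    {F S : Type*} [Field F] [Fintype F] [DecidableEq F]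
    {k n d α Q : ℕ} (hq : 2 ≤ Fintype.card F)
    (E : (Fin k → F) → (Fin n → F)) (hE : Function.Injective E)
    (hd : IsMinDist (Set.range E) d) (hα : d ≤ α)
    (hQ : Nat.card (distGraph (Set.range E) α).ConnectedComponent = Q)
    (f : (Fin k → F) → S) (d_f : ℕ) (hdf : α < d_f)
    (hfcc : ∀ u₁ u₂, f u₁ ≠ f u₂ → d_f ≤ hammingDist (E u₁) (E u₂)) :
    Nat.card (Set.range f) ≤ Q := by
  classical
  set G := distGraph (Set.range E) α
  -- ψ : C → S
  set ψ : Set.range E → S := fun c => f (Set.rangeSplitting E c) with hψ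
  have hψE : ∀ u, ψ ⟨E u, Set.mem_range_self u⟩ = f u := by
    intro u
    have : E (Set.rangeSplitting E ⟨E u, Set.mem_range_self u⟩) = E u :=
      Set.apply_rangeSplitting E _
    simp [hψ, hE this]
  have hadj : ∀ v w : Set.range E, G.Adj v w → ψ v = ψ w := by
    intro v w hvw
    obtain ⟨hne, hle⟩ : _ ∧ _ := hvw
    by_contra hne'
    have := hfcc _ _ hne'
    rw [Set.apply_rangeSplitting E v, Set.apply_rangeSplitting E w] at this
    omega
  have hwalk : ∀ (v w : Set.range E) (p : G.Walk v w), p.IsPath → ψ v = ψ w := by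
    intro v w p hp
    clear hp
    induction p with
    | nil => rfl
    | cons h p ih => exact (hadj _ _ h).trans ih
  let Φ : G.ConnectedComponent → S := SimpleGraph.ConnectedComponent.lift ψ hwalk
  have hsurj : ∀ s : Set.range f, ∃ c : G.ConnectedComponent, Φ c = s := by
    rintro ⟨s, u, rfl⟩
    exact ⟨G.connectedComponentMk ⟨E u, Set.mem_range_self u⟩, hψE u⟩
  have : Function.Surjective (fun c => if h : Φ c ∈ Set.range f then (⟨Φ c, h⟩ : Set.range f) else Classical.arbitrary _) := by
    intro s
    obtain ⟨c, hc⟩ := hsurj s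
    refine ⟨c, ?_⟩
    have hmem : Φ c ∈ Set.range f := hc ▸ s.2
    simp only [dif_pos hmem]
    exact Subtype.ext hc
  calc Nat.card (Set.range f) ≤ Nat.card G.ConnectedComponent :=
        Nat.card_le_card_of_surjective _ this
    _ = Q := hQ
end

section
/- Let C be a nonempty finite code in F^n over a finite field F, with covering radius R(C). Then for every α ≥ 2·R(C) + 1, the α-distance graph G_α(C) is connected. -/
/-- `R` is the covering radius of the code `C ⊆ F^n`, i.e.
`R = max_{x ∈ F^n} min_{c ∈ C} d(x, c)`. -/
def IsCoveringRadius {F : Type*} [DecidableEq F] {n : ℕ} (C : Set (Fin n → F)) (R : ℕ) : Prop :=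
  (∀ x : Fin n → F, ∃ c ∈ C, hammingDist x c ≤ R) ∧
  (∃ x : Fin n → F, ∀ c ∈ C, R ≤ hammingDist x c)

/-- For a nonempty code `C` with covering radius `R`, the α-distance graph
`G_α(C)` is connected for every `α ≥ 2R + 1`. -/
theorem distGraph_connected_of_two_covering_radius_add_one
    {F : Type*} [Field F] [Fintype F] [DecidableEq F]
    {n R α : ℕ} (C : Set (Fin n → F)) (hC : C.Nonempty)
    (hR : IsCoveringRadius C R) (hα : 2 * R + 1 ≤ α) :
    (distGraph C α).Connected := by
  obtain ⟨hcov, -⟩ := hR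
  have key : ∀ d : ℕ, ∀ c₁ c₂ : C, hammingDist (c₁ : Fin n → F) c₂ ≤ d →
      (distGraph C α).Reachable c₁ c₂ := by
    intro d
    induction d using Nat.strong_induction_on with
    | _ d ih =>
      intro c₁ c₂ hd
      by_cases heq : c₁ = c₂
      · exact heq ▸ SimpleGraph.Reachable.refl _
      by_cases hle : hammingDist (c₁ : Fin n → F) c₂ ≤ α
      · exact SimpleGraph.Adj.reachable ⟨heq, hle⟩
      push_neg at hle
      set D : Finset (Fin n) :=
        Finset.univ.filter (fun i => (c₁ : Fin n → F) i ≠ (c₂ : Fin n → F) i) with hD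
      have hDcard : D.card = hammingDist (c₁ : Fin n → F) c₂ := rfl
      have hbig : 2 * R + 2 ≤ D.card := by omega
      obtain ⟨S, hSsub, hScard⟩ := Finset.exists_subset_card_eq (s := D) (n := R + 1) (by omega)
      set x : Fin n → F := fun i => if i ∈ S then (c₂ : Fin n → F) i else (c₁ : Fin n → F) i
        with hx
      have hd1 : hammingDist (c₁ : Fin n → F) x = R + 1 := by
        rw [← hScard]
        unfold hammingDist
        congr 1
        ext i
        simp only [Finset.mem_filter, Finset.mem_univ, true_and, hx]
        by_cases hi : i ∈ S
        · have := hSsub hi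
          rw [hD, Finset.mem_filter] at this
          simp [hi, this.2]
        · simp [hi]
      have hd2 : hammingDist x (c₂ : Fin n → F) = D.card - (R + 1) := by
        have : (Finset.univ.filter (fun i => x i ≠ (c₂ : Fin n → F) i)) = D \ S := by
          ext i
          simp only [Finset.mem_filter, Finset.mem_univ, true_and, Finset.mem_sdiff, hx, hD]
          by_cases hi : i ∈ S
          · simp [hi]
          · simp [hi]
        rw [hammingDist, this, Finset.card_sdiff_of_subset hSsub, hScard]
      obtain ⟨c, hcC, hcx⟩ := hcov x
      have hcx' : hammingDist c x ≤ R := by rw [hammingDist_comm]; exact hcx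
      have step1 : (distGraph C α).Reachable c₁ ⟨c, hcC⟩ := by
        by_cases hc1 : c₁ = ⟨c, hcC⟩
        · exact hc1 ▸ SimpleGraph.Reachable.refl _
        · refine SimpleGraph.Adj.reachable ⟨hc1, ?_⟩
          calc hammingDist (c₁ : Fin n → F) c ≤
              hammingDist (c₁ : Fin n → F) x + hammingDist x c :=
                hammingDist_triangle _ _ _
            _ ≤ α := by omega
      have step2 : (distGraph C α).Reachable ⟨c, hcC⟩ c₂ := by
        apply ih (D.card - 1) (by omega)
        calc hammingDist c (c₂ : Fin n → F) ≤
            hammingDist c x + hammingDist x (c₂ : Fin n → F) := hammingDist_triangle _ _ _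
          _ ≤ D.card - 1 := by omega
      exact step1.trans step2
  have hne : Nonempty C := hC.to_subtype
  refine ⟨fun c₁ c₂ => key (hammingDist (c₁ : Fin n → F) c₂) c₁ c₂ le_rfl⟩
end

section
/- Let C be a nonempty finite code in F^n over a finite field F with covering radius R(C), and let C = A ∪ B be a partition of C into two nonempty disjoint subsets. Then min over a ∈ A, b ∈ B of d(a,b) ≤ 2·R(C) + 1; that is, there exist a ∈ A and b ∈ B with d(a,b) ≤ 2·R(C) + 1. -/
lemma hammingDist_update_le {F : Type*} [DecidableEq F] {n : ℕ}
    (x : Fin n → F) (i : Fin n) (v : F) :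
    hammingDist x (Function.update x i v) ≤ 1 := by
  classical
  calc hammingDist x (Function.update x i v)
      ≤ ({i} : Finset (Fin n)).card := by
        apply Finset.card_le_card
        intro j hj
        simp only [hammingDist, Finset.mem_filter, Finset.mem_univ, true_and] at hj
        simp only [Finset.mem_singleton]
        by_contra hji
        exact hj (by rw [Function.update_of_ne hji])
    _ = 1 := Finset.card_singleton i

lemma hammingDist_update_lt {F : Type*} [DecidableEq F] {n : ℕ}
    {x y : Fin n → F} {i : Fin n} (hi : x i ≠ y i) :
    hammingDist (Function.update x i (y i)) y < hammingDist x y := by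
  classical
  apply Finset.card_lt_card
  constructor
  · intro j hj
    simp only [hammingDist, Finset.mem_filter, Finset.mem_univ, true_and] at hj ⊢
    by_cases hji : j = i
    · subst hji; simp at hj
    · rwa [Function.update_of_ne hji] at hj
  · intro hsub
    have := hsub (by simp [hammingDist, hi] : i ∈ ({j | x j ≠ y j} : Finset (Fin n)))
    simp [hammingDist] at this

/-- If a nonempty code `C` with covering radius `R` is partitioned into two nonempty
disjoint parts `A` and `B`, then some `a ∈ A` and `b ∈ B` satisfy `d(a,b) ≤ 2R + 1`. -/
theorem partition_dist_le_two_covering_radius_add_one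
    {F : Type*} [Field F] [Fintype F] [DecidableEq F]
    {n R : ℕ} (C A B : Set (Fin n → F)) (hC : C.Nonempty)
    (hR : IsCoveringRadius C R)
    (hA : A.Nonempty) (hB : B.Nonempty) (hAB : Disjoint A B) (hunion : C = A ∪ B) :
    ∃ a ∈ A, ∃ b ∈ B, hammingDist a b ≤ 2 * R + 1 := by
  classical
  obtain ⟨hcov, -⟩ := hR
  obtain ⟨a0, ha0⟩ := hA
  obtain ⟨b0, hb0⟩ := hB
  suffices h : ∀ m : ℕ, ∀ x y : Fin n → F, hammingDist x y ≤ m →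
      (∃ a ∈ A, hammingDist x a ≤ R) → (∃ b ∈ B, hammingDist y b ≤ R) →
      ∃ a ∈ A, ∃ b ∈ B, hammingDist a b ≤ 2 * R + 1 by
    exact h (hammingDist a0 b0) a0 b0 le_rfl ⟨a0, ha0, by simp⟩ ⟨b0, hb0, by simp⟩
  intro m
  induction m with
  | zero =>
    rintro x y hxy ⟨a, haA, hax⟩ ⟨b, hbB, hby⟩
    have hxy0 : x = y := hammingDist_eq_zero.mp (Nat.le_zero.mp hxy)
    subst hxy0
    refine ⟨a, haA, b, hbB, ?_⟩
    calc hammingDist a b ≤ hammingDist a x + hammingDist x b := hammingDist_triangle a x b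
      _ ≤ R + R := by
          rw [hammingDist_comm a x]
          exact Nat.add_le_add hax hby
      _ ≤ 2 * R + 1 := by omega
  | succ m ih =>
    rintro x y hxy ⟨a, haA, hax⟩ ⟨b, hbB, hby⟩
    rcases Nat.eq_zero_or_pos (hammingDist x y) with h0 | hpos
    · exact ih x y (by omega) ⟨a, haA, hax⟩ ⟨b, hbB, hby⟩
    · have hne : x ≠ y := hammingDist_pos.mp hpos
      obtain ⟨i, hi⟩ := Function.ne_iff.mp hne
      set x' := Function.update x i (y i) with hx'
      have hdec : hammingDist x' y < hammingDist x y := hammingDist_update_lt hi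
      obtain ⟨c, hcC, hc⟩ := hcov x'
      rw [hunion] at hcC
      rcases hcC with hcA | hcB
      · exact ih x' y (by omega) ⟨c, hcA, hc⟩ ⟨b, hbB, hby⟩
      · refine ⟨a, haA, c, hcB, ?_⟩
        calc hammingDist a c ≤ hammingDist a x + hammingDist x c :=
              hammingDist_triangle a x c
          _ ≤ hammingDist a x + (hammingDist x x' + hammingDist x' c) :=
              Nat.add_le_add_left (hammingDist_triangle x x' c) _
          _ ≤ R + (1 + R) := by
              have h1 : hammingDist a x ≤ R := by rwa [hammingDist_comm]
              exact Nat.add_le_add h1 (Nat.add_le_add (hammingDist_update_le x i (y i)) hc)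
          _ ≤ 2 * R + 1 := by omega
end

section
/- Let F be a finite field with q ≥ 2 elements, let E : F^k → F^n be an injective encoding whose image C has minimum Hamming distance d, and let R(C) denote the covering radius of C. Then there is no function f : F^k → S with |Im(f)| ≥ 2 and no integer d_f > 2·R(C) + 1 such that d(E(u₁), E(u₂)) ≥ d_f for all u₁, u₂ with f(u₁) ≠ f(u₂). Equivalently: if d_f > 2·R(C) + 1 and f satisfies d(E(u₁),E(u₂)) ≥ d_f whenever f(u₁) ≠ f(u₂), then f is constant. -/
lemma update_dist_le_one {F : Type*} [DecidableEq F] {n : ℕ} (x : Fin n → F) (i : Fin n)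
    (a : F) : hammingDist (Function.update x i a) x ≤ 1 := by
  classical
  rw [hammingDist]
  calc (Finset.univ.filter fun j => Function.update x i a j ≠ x j).card
      ≤ ({i} : Finset (Fin n)).card := by
        apply Finset.card_le_card
        intro j hj
        simp only [Finset.mem_filter, Finset.mem_univ, true_and] at hj
        simp only [Finset.mem_singleton]
        by_contra h
        exact hj (by rw [Function.update_of_ne h])
    _ = 1 := Finset.card_singleton i

/-- A code with covering radius `R` cannot separate two distinct function values by a
distance `d_f > 2R + 1`: if codewords with distinct function values are at Hamming
distance `≥ d_f > 2R + 1`, then `f` is constant. -/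
theorem no_strict_FCC_of_covering_radius
    {F S : Type*} [Field F] [Fintype F] [DecidableEq F]
    {k n d R : ℕ} (hq : 2 ≤ Fintype.card F)
    (E : (Fin k → F) → (Fin n → F)) (hE : Function.Injective E)
    (hd : IsMinDist (Set.range E) d)
    (hR : IsCoveringRadius (Set.range E) R)
    (f : (Fin k → F) → S) (d_f : ℕ) (hdf : 2 * R + 1 < d_f)
    (hfcc : ∀ u₁ u₂, f u₁ ≠ f u₂ → d_f ≤ hammingDist (E u₁) (E u₂)) :
    ∀ u₁ u₂, f u₁ = f u₂ := by
  classical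
  -- decode function: for each x, a message whose codeword is within R of x
  have hcov : ∀ x : Fin n → F, ∃ u, hammingDist x (E u) ≤ R := by
    intro x
    obtain ⟨c, ⟨u, rfl⟩, hc⟩ := hR.1 x
    exact ⟨u, hc⟩
  choose dec hdec using hcov
  -- close pairs have equal f-values
  have hclose : ∀ u₁ u₂ : Fin k → F, hammingDist (E u₁) (E u₂) < d_f → f u₁ = f u₂ := by
    intro u₁ u₂ h
    by_contra hne
    exact absurd (hfcc u₁ u₂ hne) (by omega)
  -- one-step lemma
  have hstep : ∀ x y : Fin n → F, hammingDist x y ≤ 1 → f (dec x) = f (dec y) := by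
    intro x y h
    apply hclose
    calc hammingDist (E (dec x)) (E (dec y))
        ≤ hammingDist (E (dec x)) x + hammingDist x y + hammingDist y (E (dec y)) := by
          refine le_trans (hammingDist_triangle _ y _) ?_
          exact add_le_add_left (hammingDist_triangle _ x _) _
      _ ≤ R + 1 + R := by
          have h1 := hdec x
          have h2 := hdec y
          rw [hammingDist_comm] at h1
          omega
      _ < d_f := by omega
  -- main: dec values all have the same f-value
  have main : ∀ m : ℕ, ∀ x y : Fin n → F, hammingDist x y ≤ m → f (dec x) = f (dec y) := by
    intro m
    induction m with
    | zero => intro x y h; exact hstep x y (by omega)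
    | succ m ih =>
      intro x y h
      by_cases hxy : x = y
      · rw [hxy]
      · obtain ⟨i, hi⟩ : ∃ i, x i ≠ y i := by
          by_contra hc
          push_neg at hc
          exact hxy (funext hc)
        set x' := Function.update x i (y i) with hx'
        have hlt : hammingDist x' y < hammingDist x y := by
          apply Finset.card_lt_card
          constructor
          · intro j hj
            simp only [Finset.mem_filter, Finset.mem_univ, true_and] at hj ⊢
            by_cases hji : j = i
            · subst hji; simp [hx'] at hj
            · rwa [hx', Function.update_of_ne hji] at hj
          · intro hsub
            have : i ∈ (Finset.univ.filter fun j => x' j ≠ y j) :=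
              hsub (by simp [hi])
            simp [hx'] at this
        have h1 : f (dec x) = f (dec x') :=
          hstep x x' (by rw [hammingDist_comm]; exact update_dist_le_one x i (y i))
        rw [h1]
        exact ih x' y (by omega)
  intro u₁ u₂
  have h1 : f u₁ = f (dec (E u₁)) := hclose _ _ (by have := hdec (E u₁); omega)
  have h2 : f u₂ = f (dec (E u₂)) := hclose _ _ (by have := hdec (E u₂); omega)
  rw [h1, h2]
  exact main (hammingDist (E u₁) (E u₂)) _ _ le_rfl
end

section
/- Let F be a finite field with q elements and let C ⊆ F^n be an MDS code with minimum Hamming distance d, i.e., |C| = q^{n−d+1}. Then for any two distinct codewords u, v ∈ C there exists a codeword u′ ∈ C such that d(u,u′) = d and d(u′,v) ≤ d(u,v) − 1. Moreover, if d(u,v) = d then u′ may be taken to be v itself. -/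
lemma hammingDist_le_of_agree {F : Type*} [DecidableEq F] {n : ℕ} {x y : Fin n → F}
    (S : Finset (Fin n)) (h : ∀ i ∈ S, x i = y i) :
    hammingDist x y ≤ n - S.card := by
  have hsub : ({i | x i ≠ y i} : Finset (Fin n)) ⊆ Sᶜ := by
    intro i hi
    simp only [Finset.mem_filter, Finset.mem_univ, true_and] at hi
    simp only [Finset.mem_compl]
    exact fun hiS => hi (h i hiS)
  calc hammingDist x y ≤ Sᶜ.card := Finset.card_le_card hsub
    _ = n - S.card := by rw [Finset.card_compl, Fintype.card_fin]

/-- MDS interpolation: any prescribed values on `n-d+1` coordinates are achieved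
by some codeword. -/
lemma MDS_interpolate {F : Type*} [Field F] [Fintype F] [DecidableEq F]
    {n d : ℕ} (C : Set (Fin n → F))
    (hmd : IsMinDist C d)
    (hMDS : C.ncard = Fintype.card F ^ (n - d + 1))
    (hd1 : 1 ≤ d) (hdn : d ≤ n)
    (S : Finset (Fin n)) (hS : S.card = n - d + 1) (w : Fin n → F) :
    ∃ c ∈ C, ∀ i ∈ S, c i = w i := by
  haveI : Fintype C := (Set.toFinite C).fintype
  set φ : C → (↥S → F) := fun c i => c.1 i.1 with hφ
  have hinj : Function.Injective φ := by
    rintro ⟨c₁, h₁⟩ ⟨c₂, h₂⟩ h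
    ext1
    by_contra hne
    have hag : ∀ i ∈ S, c₁ i = c₂ i := fun i hi => congrFun h ⟨i, hi⟩
    have h1 := hammingDist_le_of_agree S hag
    have h2 := hmd.1 c₁ h₁ c₂ h₂ hne
    omega
  have hcard : Fintype.card C = Fintype.card (↥S → F) := by
    rw [Fintype.card_fun, Fintype.card_coe, hS, ← hMDS, ← Nat.card_coe_set_eq,
      Nat.card_eq_fintype_card]
  have hbij : Function.Bijective φ :=
    (Fintype.bijective_iff_injective_and_card φ).2 ⟨hinj, hcard⟩
  obtain ⟨⟨c, hc⟩, hcw⟩ := hbij.2 (fun i => w i.1)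
  exact ⟨c, hc, fun i hi => congrFun hcw ⟨i, hi⟩⟩

/-- In an MDS code `C` with minimum distance `d` (`|C| = q^{n-d+1}`), for any two
distinct codewords `u, v` there is a codeword `u'` with `d(u,u') = d` and
`d(u',v) ≤ d(u,v) − 1`; moreover if `d(u,v) = d` then `u'` may be taken to be `v`. -/
theorem MDS_step_towards_codeword
    {F : Type*} [Field F] [Fintype F] [DecidableEq F]
    {n d : ℕ} (C : Set (Fin n → F))
    (hmd : IsMinDist C d)
    (hMDS : C.ncard = Fintype.card F ^ (n - d + 1))
    (u v : Fin n → F) (hu : u ∈ C) (hv : v ∈ C) (huv : u ≠ v) :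
    (∃ u' ∈ C, hammingDist u u' = d ∧ hammingDist u' v ≤ hammingDist u v - 1) ∧
    (hammingDist u v = d →
      ∃ u' ∈ C, u' = v ∧ hammingDist u u' = d ∧ hammingDist u' v ≤ hammingDist u v - 1) := by
  obtain ⟨hlow, c₁, hc₁, c₂, hc₂, hne, hdist⟩ := hmd
  have hd1 : 1 ≤ d := by
    have := hammingDist_pos.2 hne
    omega
  have hdn : d ≤ n := by
    have := @hammingDist_le_card_fintype (Fin n) (fun _ => F) _ _ c₁ c₂
    rw [Fintype.card_fin] at this
    omega
  set t := hammingDist u v with ht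
  have hdt : d ≤ t := hlow u hu v hv huv
  have htn : t ≤ n := by
    have := @hammingDist_le_card_fintype (Fin n) (fun _ => F) _ _ u v
    rwa [Fintype.card_fin] at this
  rcases eq_or_lt_of_le hdt with heq | hlt
  · refine ⟨⟨v, hv, heq.symm, by simp⟩, fun _ => ⟨v, hv, rfl, heq.symm, by simp⟩⟩
  · refine ⟨?_, fun h => absurd h (by omega)⟩
    set D : Finset (Fin n) := {i | u i ≠ v i} with hD
    have hDcard : D.card = t := rfl
    obtain ⟨B, hBD, hBcard⟩ := Finset.exists_subset_card_eq (show t - d ≤ D.card by omega)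
    have hDB : (D \ B).Nonempty := by
      rw [← Finset.card_pos, Finset.card_sdiff_of_subset hBD]
      omega
    obtain ⟨c, hc⟩ := hDB
    have hcD : c ∈ D := (Finset.mem_sdiff.1 hc).1
    have hcB : c ∉ B := (Finset.mem_sdiff.1 hc).2
    set S : Finset (Fin n) := Dᶜ ∪ B ∪ {c} with hSdef
    have hScard : S.card = n - d + 1 := by
      rw [hSdef, Finset.card_union_of_disjoint, Finset.card_union_of_disjoint,
        Finset.card_compl, Fintype.card_fin, hDcard, hBcard, Finset.card_singleton]
      · omega
      · exact Finset.disjoint_left.2 fun i hi hi' =>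
          (Finset.mem_compl.1 hi) (hBD hi')
      · refine Finset.disjoint_left.2 fun i hi hi' => ?_
        rw [Finset.mem_singleton] at hi'
        subst hi'
        rcases Finset.mem_union.1 hi with h | h
        · exact (Finset.mem_compl.1 h) hcD
        · exact hcB h
    set w : Fin n → F := fun i => if i = c then v i else u i with hw
    obtain ⟨u', hu'C, hu'w⟩ := MDS_interpolate C ⟨hlow, c₁, hc₁, c₂, hc₂, hne, hdist⟩
      hMDS hd1 hdn S hScard w
    have hu'c : u' c = v c := by
      have := hu'w c (by simp [hSdef])
      simpa [hw] using this
    have hu'u : ∀ i ∈ Dᶜ ∪ B, u' i = u i := by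
      intro i hi
      have hiS : i ∈ S := Finset.mem_union.2 (Or.inl hi)
      have hic : i ≠ c := by
        rintro rfl
        rcases Finset.mem_union.1 hi with h | h
        · exact (Finset.mem_compl.1 h) hcD
        · exact hcB h
      have := hu'w i hiS
      simpa [hw, hic] using this
    have hune : u ≠ u' := by
      intro h
      apply Finset.mem_filter.1 hcD |>.2
      rw [h, hu'c]
    have hduu' : hammingDist u u' = d := by
      have hle : hammingDist u u' ≤ d := by
        have := hammingDist_le_of_agree (Dᶜ ∪ B) (fun i hi => (hu'u i hi).symm)
        have hcardDB : (Dᶜ ∪ B).card = n - d := by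
          rw [Finset.card_union_of_disjoint, Finset.card_compl, Fintype.card_fin,
            hDcard, hBcard]
          · omega
          · exact Finset.disjoint_left.2 fun i hi hi' =>
              (Finset.mem_compl.1 hi) (hBD hi')
        rw [hcardDB] at this
        omega
      exact le_antisymm hle (hlow u hu u' hu'C hune)
    refine ⟨u', hu'C, hduu', ?_⟩
    -- u' agrees with v on Dᶜ ∪ {c}, so differs at most on D \ {c}
    have hsub : ({i | u' i ≠ v i} : Finset (Fin n)) ⊆ D \ {c} := by
      intro i hi
      simp only [Finset.mem_filter, Finset.mem_univ, true_and] at hi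
      rw [Finset.mem_sdiff, Finset.mem_singleton]
      constructor
      · by_contra hiD
        have hiDc : i ∈ Dᶜ := Finset.mem_compl.2 hiD
        have h1 : u' i = u i := hu'u i (Finset.mem_union.2 (Or.inl hiDc))
        have h2 : u i = v i := by
          by_contra h2
          exact hiD (Finset.mem_filter.2 ⟨Finset.mem_univ i, h2⟩)
        exact hi (h1.trans h2)
      · rintro rfl
        exact hi hu'c
    calc hammingDist u' v ≤ (D \ {c}).card := Finset.card_le_card hsub
      _ = t - 1 := by rw [Finset.card_sdiff_of_subset (Finset.singleton_subset_iff.2 hcD),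
          hDcard, Finset.card_singleton]
end

section
/- Let F be a finite field with q elements and let C ⊆ F^n be an MDS code with minimum Hamming distance d, i.e., |C| = q^{n−d+1}. Then the minimum-distance graph G(C) (vertices are the codewords of C, with distinct codewords adjacent iff their Hamming distance is at most d, equivalently exactly d) is connected. -/
/-- The minimum-distance graph of any MDS code (`|C| = q^{n−d+1}` where `d` is the
minimum distance) is connected. -/
theorem MDS_minDistGraph_connected
    {F : Type*} [Field F] [Fintype F] [DecidableEq F]
    {n d : ℕ} (C : Set (Fin n → F))
    (hmd : IsMinDist C d)
    (hMDS : C.ncard = Fintype.card F ^ (n - d + 1)) :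
    (distGraph C d).Connected := by
  classical
  obtain ⟨hmin, c₁, hc₁, c₂, hc₂, hne12, hdist12⟩ := hmd
  have hd1 : 1 ≤ d := by
    rw [← hdist12]
    exact Nat.one_le_iff_ne_zero.2 (hammingDist_ne_zero.2 hne12)
  have hdn : d ≤ n := by
    rw [← hdist12]
    simpa using hammingDist_le_card_fintype (x := c₁) (y := c₂)
  -- restriction to any (n-d+1)-set of coordinates is bijective
  have hsurj : ∀ T : Finset (Fin n), T.card = n - d + 1 →
      ∀ g : T → F, ∃ w ∈ C, ∀ i : T, w (i : Fin n) = g i := by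
    intro T hT g
    set res : C → (T → F) := fun c i => (c : Fin n → F) i with hres
    have hinj : Function.Injective res := by
      intro a b hab
      by_cases hab' : (a : Fin n → F) = b
      · exact Subtype.ext hab'
      · exfalso
        have hsub : ({i | (a : Fin n → F) i ≠ (b : Fin n → F) i} : Finset (Fin n))
            ⊆ Finset.univ \ T := by
          intro i hi
          simp only [Finset.mem_filter] at hi
          simp only [Finset.mem_sdiff, Finset.mem_univ, true_and]
          intro hiT
          exact hi.2 (congrFun hab ⟨i, hiT⟩)
        have h2 : hammingDist (a : Fin n → F) b ≤ n - T.card := by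
          have := Finset.card_le_card hsub
          simpa [hammingDist, Finset.card_sdiff_of_subset (Finset.subset_univ T)] using this
        have h3 := hmin a a.2 b b.2 hab'
        omega
    have hcard : Nat.card C = Nat.card (T → F) := by
      rw [Nat.card_coe_set_eq, hMDS, Nat.card_eq_fintype_card, Fintype.card_fun,
        Fintype.card_coe, hT]
    have hbij : Function.Bijective res :=
      (Nat.bijective_iff_injective_and_card res).2 ⟨hinj, hcard⟩
    obtain ⟨c, hc⟩ := hbij.2 g
    exact ⟨c, c.2, fun i => congrFun hc i⟩
  have key : ∀ e : ℕ, ∀ u : Fin n → F, ∀ hu : u ∈ C, ∀ v : Fin n → F, ∀ hv : v ∈ C,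
      hammingDist u v ≤ e → (distGraph C d).Reachable ⟨u, hu⟩ ⟨v, hv⟩ := by
    intro e
    induction e with
    | zero =>
      intro u hu v hv h
      have : u = v := hammingDist_eq_zero.1 (Nat.le_zero.1 h)
      subst this
      exact SimpleGraph.Reachable.refl _
    | succ e ih =>
      intro u hu v hv h
      by_cases huv : u = v
      · subst huv; exact SimpleGraph.Reachable.refl _
      by_cases hle : hammingDist u v ≤ d
      · exact SimpleGraph.Adj.reachable ⟨fun hh => huv (congrArg Subtype.val hh), hle⟩
      push_neg at hle
      set S : Finset (Fin n) := {i | u i ≠ v i} with hSdef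
      have hS : S.card = hammingDist u v := rfl
      have hScompl : (Finset.univ \ S).card = n - S.card := by
        simp [Finset.card_sdiff_of_subset (Finset.subset_univ S)]
      obtain ⟨T, hTsub, hTcard⟩ :=
        Finset.exists_superset_card_eq (s := Finset.univ \ S) (n := n - d + 1)
          (by omega) (by simp; omega)
      have hTS : (T \ (Finset.univ \ S)).Nonempty := by
        rw [← Finset.card_pos, Finset.card_sdiff_of_subset hTsub]
        omega
      obtain ⟨j, hj⟩ := hTS
      have hjT : j ∈ T := (Finset.mem_sdiff.1 hj).1
      have hjS : j ∈ S := by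
        have := (Finset.mem_sdiff.1 hj).2
        simp only [Finset.mem_sdiff, Finset.mem_univ, true_and, not_not] at this
        exact this
      have hjuv : u j ≠ v j := by
        have := hjS; rw [hSdef] at this; simpa using this
      obtain ⟨w, hwC, hw⟩ := hsurj T hTcard
        (fun i => if (i : Fin n) = j then v j else u i)
      have hwj : w j = v j := by simpa using hw ⟨j, hjT⟩
      have hwi : ∀ i, i ∈ T → i ≠ j → w i = u i := by
        intro i hiT hij
        simpa [hij] using hw ⟨i, hiT⟩
      have hwu : w ≠ u := fun hh => hjuv (by rw [← hwj, hh])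
      have hduw : hammingDist u w ≤ d := by
        have hsub : ({i | u i ≠ w i} : Finset (Fin n)) ⊆
            insert j (Finset.univ \ T) := by
          intro i hi
          simp only [Finset.mem_filter] at hi
          rw [Finset.mem_insert]
          by_cases hij : i = j
          · exact Or.inl hij
          · refine Or.inr ?_
            simp only [Finset.mem_sdiff, Finset.mem_univ, true_and]
            intro hiT
            exact hi.2 ((hwi i hiT hij).symm)
        have h1 := Finset.card_le_card hsub
        have h2 : (insert j (Finset.univ \ T)).card ≤ (Finset.univ \ T).card + 1 :=
          Finset.card_insert_le _ _
        have h3 : (Finset.univ \ T).card = n - T.card := by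
          simp [Finset.card_sdiff_of_subset (Finset.subset_univ T)]
        have h4 : hammingDist u w = ({i | u i ≠ w i} : Finset (Fin n)).card := rfl
        omega
      have hdwv : hammingDist w v ≤ e := by
        have hsub : ({i | w i ≠ v i} : Finset (Fin n)) ⊆ S.erase j := by
          intro i hi
          simp only [Finset.mem_filter] at hi
          have hij : i ≠ j := fun hh => hi.2 (by rw [hh, hwj])
          rw [Finset.mem_erase]
          refine ⟨hij, ?_⟩
          by_contra hiS
          have hiT : i ∈ T := hTsub (by simp [hSdef] at hiS ⊢; exact hiS)
          have huvi : u i = v i := by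
            by_contra hne
            exact hiS (by simp [hSdef, hne])
          exact hi.2 (by rw [hwi i hiT hij, huvi])
        have h1 := Finset.card_le_card hsub
        have h2 : (S.erase j).card = S.card - 1 := Finset.card_erase_of_mem hjS
        have h4 : hammingDist w v = ({i | w i ≠ v i} : Finset (Fin n)).card := rfl
        omega
      have adj : (distGraph C d).Adj ⟨u, hu⟩ ⟨w, hwC⟩ :=
        ⟨fun hh => hwu (congrArg Subtype.val hh).symm, hduw⟩
      exact adj.reachable.trans (ih w hwC v hv hdwv)
  rw [SimpleGraph.connected_iff]
  refine ⟨?_, ⟨⟨c₁, hc₁⟩⟩⟩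
  intro a b
  obtain ⟨u, hu⟩ := a
  obtain ⟨v, hv⟩ := b
  exact key (hammingDist u v) u hu v hv le_rfl
end

section
/- Let F be a finite field with q ≥ 2 elements, let f : F^k → S be a non-constant function, and let d ≤ d_f be integers with d_f > d. Then every (f : d, d_f)-function-correcting code 𝔠 : F^k → F^{k+r} satisfies r ≥ d; i.e., the optimal redundancy r_f(k : d, d_f) ≥ d. In particular, no encoding 𝔠 : F^k → F^{k+d−1} whose image is an MDS code of minimum distance d can be an (f : d, d_f)-FCC with d_f > d for a non-constant f. -/
lemma hammingDist_split {F : Type*} [DecidableEq F] {k r : ℕ} (c₁ c₂ : Fin (k + r) → F) :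
    hammingDist c₁ c₂ ≤ hammingDist (c₁ ∘ Fin.castAdd r) (c₂ ∘ Fin.castAdd r) + r := by
  classical
  have hsub : (Finset.univ.filter fun i => c₁ i ≠ c₂ i) ⊆
      ((Finset.univ.filter fun j : Fin k => c₁ (Fin.castAdd r j) ≠ c₂ (Fin.castAdd r j)).image
        (Fin.castAdd r)) ∪ (Finset.univ.image (Fin.natAdd k : Fin r → Fin (k + r))) := by
    intro i hi
    simp only [Finset.mem_filter, Finset.mem_univ, true_and] at hi
    by_cases h : (i : ℕ) < k
    · apply Finset.mem_union_left
      refine Finset.mem_image.mpr ⟨⟨(i : ℕ), h⟩, ?_, ?_⟩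
      · simp only [Finset.mem_filter, Finset.mem_univ, true_and]
        have he : Fin.castAdd r ⟨(i : ℕ), h⟩ = i := by ext; simp
        rw [he]; exact hi
      · ext; simp
    · apply Finset.mem_union_right
      have hlt : (i : ℕ) - k < r := by have := i.isLt; omega
      refine Finset.mem_image.mpr ⟨⟨(i : ℕ) - k, hlt⟩, Finset.mem_univ _, ?_⟩
      ext; simp [Fin.natAdd]; omega
  calc hammingDist c₁ c₂ = (Finset.univ.filter fun i => c₁ i ≠ c₂ i).card := rfl
    _ ≤ _ := Finset.card_le_card hsub
    _ ≤ _ + _ := Finset.card_union_le _ _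
    _ ≤ hammingDist (c₁ ∘ Fin.castAdd r) (c₂ ∘ Fin.castAdd r) + r := by
        refine add_le_add (Finset.card_image_le.trans_eq rfl) ?_
        exact Finset.card_image_le.trans (by simp)

lemma exists_adjacent_ne {F S : Type*} [DecidableEq F] {k : ℕ}
    (h : (Fin k → F) → S) :
    ∀ (n : ℕ) (a b : Fin k → F), hammingDist a b ≤ n → h a ≠ h b →
    ∃ v w, hammingDist v w ≤ 1 ∧ h v ≠ h w := by
  intro n
  induction n with
  | zero => intro a b hd hne; exact ⟨a, b, by omega, hne⟩
  | succ n ih =>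
    intro a b hd hne
    by_cases h1 : hammingDist a b ≤ 1
    · exact ⟨a, b, h1, hne⟩
    · have hab : a ≠ b := by
        intro hEq; exact hne (hEq ▸ rfl)
      obtain ⟨i, hi⟩ : ∃ i, a i ≠ b i := by
        by_contra hc
        push_neg at hc
        exact hab (funext hc)
      set a' := Function.update a i (b i) with ha'
      have hmem : i ∈ Finset.univ.filter fun j => a j ≠ b j := by
        simp [hi]
      have hsub : (Finset.univ.filter fun j => a' j ≠ b j) ⊆
          (Finset.univ.filter fun j => a j ≠ b j).erase i := by
        intro j hj
        simp only [Finset.mem_filter, Finset.mem_univ, true_and] at hj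
        rcases eq_or_ne j i with rfl | hji
        · simp [ha', Function.update_self] at hj
        · refine Finset.mem_erase.mpr ⟨hji, ?_⟩
          simp only [Finset.mem_filter, Finset.mem_univ, true_and]
          rwa [ha', Function.update_of_ne hji] at hj
      have hcard : hammingDist a' b ≤ hammingDist a b - 1 := by
        calc hammingDist a' b ≤ ((Finset.univ.filter fun j => a j ≠ b j).erase i).card :=
              Finset.card_le_card hsub
          _ = (Finset.univ.filter fun j => a j ≠ b j).card - 1 :=
              Finset.card_erase_of_mem hmem
          _ = hammingDist a b - 1 := rfl
      have hda' : hammingDist a' b ≤ n := by omega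
      by_cases hh : h a = h a'
      · exact ih a' b hda' (fun hcon => hne (hh.trans hcon))
      · refine ⟨a, a', ?_, hh⟩
        have : (Finset.univ.filter fun j => a j ≠ a' j) ⊆ {i} := by
          intro j hj
          simp only [Finset.mem_filter, Finset.mem_univ, true_and] at hj
          rcases eq_or_ne j i with rfl | hji
          · simp
          · rw [ha', Function.update_of_ne hji] at hj
            exact absurd rfl hj
        calc hammingDist a a' = (Finset.univ.filter fun j => a j ≠ a' j).card := rfl
          _ ≤ ({i} : Finset (Fin k)).card := Finset.card_le_card this
          _ = 1 := rfl

/-- `𝔠 : F^k → F^m` is an `(f : d_d, d_f)`-function-correcting code: any two distinct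
messages are encoded at Hamming distance at least `d_d`, and any two messages with
distinct function values are encoded at Hamming distance at least `d_f`. -/
def IsFCC {F S : Type*} [DecidableEq F] {k m : ℕ}
    (f : (Fin k → F) → S) (dd df : ℕ) (𝔠 : (Fin k → F) → (Fin m → F)) : Prop :=
  (∀ u₁ u₂ : Fin k → F, u₁ ≠ u₂ → dd ≤ hammingDist (𝔠 u₁) (𝔠 u₂)) ∧
  (∀ u₁ u₂ : Fin k → F, f u₁ ≠ f u₂ → df ≤ hammingDist (𝔠 u₁) (𝔠 u₂))

/-- Any strict `(f : d, d_f)`-FCC for a non-constant `f` has redundancy `r ≥ d`; in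
particular no encoding `𝔠 : F^k → F^{k+d−1}` whose image is an MDS code of minimum
distance `d` can be a strict `(f : d, d_f)`-FCC for a non-constant `f`. -/
theorem strict_FCC_redundancy_MDS_bound
    {F S : Type*} [Field F] [Fintype F] [DecidableEq F]
    {k d d_f : ℕ} (hq : 2 ≤ Fintype.card F)
    (f : (Fin k → F) → S) (hf : ∃ u v : Fin k → F, f u ≠ f v)
    (hdf : d < d_f) :
    (∀ (r : ℕ) (𝔠 : (Fin k → F) → (Fin (k + r) → F)), IsFCC f d d_f 𝔠 → d ≤ r) ∧
    (∀ 𝔠 : (Fin k → F) → (Fin (k + (d - 1)) → F),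
      IsMinDist (Set.range 𝔠) d → (Set.range 𝔠).ncard = Fintype.card F ^ k →
        ¬ IsFCC f d d_f 𝔠) := by
  have main : ∀ (r : ℕ) (𝔠 : (Fin k → F) → (Fin (k + r) → F)), IsFCC f d d_f 𝔠 → d ≤ r := by
    intro r 𝔠 hc
    by_contra hr
    push_neg at hr
    obtain ⟨hdd, hdfc⟩ := hc
    set g : (Fin k → F) → (Fin k → F) := fun u => (𝔠 u) ∘ Fin.castAdd r with hg
    have hginj : Function.Injective g := by
      intro u₁ u₂ hgu
      by_contra hne
      have h1 := hdd u₁ u₂ hne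
      have h2 := hammingDist_split (𝔠 u₁) (𝔠 u₂)
      have h0 : hammingDist ((𝔠 u₁) ∘ Fin.castAdd r) ((𝔠 u₂) ∘ Fin.castAdd r) = 0 := by
        rw [show (𝔠 u₁) ∘ Fin.castAdd r = g u₁ from rfl,
            show (𝔠 u₂) ∘ Fin.castAdd r = g u₂ from rfl, hgu]
        exact hammingDist_self _
      omega
    have hgbij : Function.Bijective g := Finite.injective_iff_bijective.mp hginj
    set e := Equiv.ofBijective g hgbij with he
    obtain ⟨u, v, huv⟩ := hf
    have hne' : (fun w => f (e.symm w)) (e u) ≠ (fun w => f (e.symm w)) (e v) := by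
      simpa using huv
    obtain ⟨v₁, v₂, hd1, hne⟩ := exists_adjacent_ne (fun w => f (e.symm w))
      (Fintype.card (Fin k)) (e u) (e v) (hammingDist_le_card_fintype) hne'
    have h3 := hdfc (e.symm v₁) (e.symm v₂) hne
    have h4 := hammingDist_split (𝔠 (e.symm v₁)) (𝔠 (e.symm v₂))
    have hg1 : (𝔠 (e.symm v₁)) ∘ Fin.castAdd r = v₁ := e.apply_symm_apply v₁
    have hg2 : (𝔠 (e.symm v₂)) ∘ Fin.castAdd r = v₂ := e.apply_symm_apply v₂
    rw [hg1, hg2] at h4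
    omega
  refine ⟨main, ?_⟩
  intro 𝔠 hmin hcard hfcc
  rcases Nat.eq_zero_or_pos d with hd0 | hdpos
  · obtain ⟨-, c₁, -, c₂, -, hne, hdist⟩ := hmin
    have h0 : hammingDist c₁ c₂ = 0 := by omega
    exact hne (hammingDist_eq_zero.mp h0)
  · have := main (d - 1) 𝔠 hfcc
    omega
end

section
/- Let F be a finite field with q elements and let C ⊆ F^n be a linear code of dimension k with minimum Hamming distance d that is spanned by its minimum-weight codewords, and fix a linear injective encoding E : F^k → F^n with image C. Then there is no function f : F^k → S with |Im(f)| ≥ 2 and no integer d_f > d such that d(E(u₁), E(u₂)) ≥ d_f for all u₁, u₂ with f(u₁) ≠ f(u₂); i.e., C cannot serve as an (f : d, d_f)-FCC with d_f > d for any non-constant f. -/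
/-- A linear code of dimension `k` over `F` that is spanned by its minimum-weight
codewords cannot serve as a strict `(f : d, d_f)`-FCC with `d_f > d` for any
non-constant function `f`: if codewords corresponding to distinct function values
were at Hamming distance `≥ d_f > d`, then `f` would be constant. -/
theorem linear_code_span_minWeight_no_strict_FCC
    {F S : Type*} [Field F] [Fintype F] [DecidableEq F]
    {n k d : ℕ} (C : Submodule F (Fin n → F))
    (hdim : Module.finrank F C = k)
    (hlb : ∀ w ∈ C, w ≠ 0 → d ≤ hammingNorm w)
    (hex : ∃ w ∈ C, w ≠ 0 ∧ hammingNorm w = d)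
    (hspan : Submodule.span F {w : Fin n → F | w ∈ C ∧ hammingNorm w = d} = C)
    (E : (Fin k → F) →ₗ[F] (Fin n → F)) (hE : Function.Injective E)
    (hrange : LinearMap.range E = C)
    (f : (Fin k → F) → S) (d_f : ℕ) (hdf : d < d_f)
    (hfcc : ∀ u₁ u₂ : Fin k → F, f u₁ ≠ f u₂ → d_f ≤ hammingDist (E u₁) (E u₂)) :
    ∀ u₁ u₂ : Fin k → F, f u₁ = f u₂ := by
  classical
  set W : Set (Fin n → F) := {w : Fin n → F | w ∈ C ∧ hammingNorm w = d} with hW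
  set T : Set (Fin k → F) := {m | m = 0 ∨ hammingNorm (E m) = d} with hT
  -- step property: adding an element of T does not change f
  have hstep : ∀ m ∈ T, ∀ u : Fin k → F, f u = f (u + m) := by
    intro m hm u
    rcases hm with hm0 | hmd
    · simp [hm0]
    · by_contra hne
      have := hfcc u (u + m) hne
      have hdist : hammingDist (E u) (E (u + m)) = d := by
        rw [hammingDist_eq_hammingNorm]
        have : -E u + E (u + m) = E m := by
          rw [map_add]; ring
        rw [this]
        simpa [hammingNorm, neg_eq_zero] using hmd
      omega
  -- W ⊆ E '' (E⁻¹' W)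
  have hWsub : W ⊆ Set.range E := by
    intro w hw
    have : w ∈ C := hw.1
    rw [← hrange] at this
    exact this
  have hWimg : W = E '' (E ⁻¹' W) := (Set.image_preimage_eq_of_subset hWsub).symm
  -- span of preimage is ⊤
  have hspanT' : Submodule.span F (E ⁻¹' W) = ⊤ := by
    apply Submodule.map_injective_of_injective hE
    rw [Submodule.map_span, ← hWimg, hspan, Submodule.map_top, hrange]
  -- E⁻¹' W ⊆ T
  have hsub : E ⁻¹' W ⊆ T := fun m hm => Or.inr hm.2
  have hspanTop : Submodule.span F T = ⊤ :=
    top_le_iff.mp (hspanT' ▸ Submodule.span_mono hsub)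
  -- T closed under scalar multiplication
  have hTsmul : ∀ (c : F), ∀ m ∈ T, c • m ∈ T := by
    intro c m hm
    rcases eq_or_ne c 0 with rfl | hc
    · left; simp
    rcases hm with rfl | hmd
    · left; simp
    · right
      rw [map_smul]
      rw [← hmd]
      simp only [hammingNorm]
      congr 1
      ext i
      simp [smul_eq_mul, hc]
  -- sums of elements of T don't change f
  have hsum : ∀ (N : ℕ) (v : Fin N → (Fin k → F)), (∀ i, v i ∈ T) →
      ∀ u : Fin k → F, f u = f (u + ∑ i, v i) := by
    intro N
    induction N with
    | zero => intro v hv u; simp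
    | succ N ih =>
      intro v hv u
      rw [Fin.sum_univ_succ, ← add_assoc]
      rw [hstep (v 0) (hv 0) u]
      exact ih (fun i => v i.succ) (fun i => hv i.succ) (u + v 0)
  intro u₁ u₂
  have hmem : u₂ - u₁ ∈ Submodule.span F T := by rw [hspanTop]; trivial
  rw [Submodule.mem_span_set'] at hmem
  obtain ⟨N, c, g, hg⟩ := hmem
  have := hsum N (fun i => c i • (g i : Fin k → F))
    (fun i => hTsmul (c i) (g i) (g i).2) u₁
  rw [hg] at this
  simpa using this
end
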